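/- arXiv:cs/9912001 — 2 statements merged into one kernel-verified Lean document; each statement's English description precedes it below -/
import Mathlib

section
/- Random Horn satisfiability has a coarse threshold at 2ⁿ: there exists ε > 0 such that, defining μ₁(n) = min{m ∈ ℕ : Pr_{Φ∈Ω(n,m)}[Φ satisfiable] ≤ 1 − ε} and μ₂(n) = min{m ∈ ℕ : Pr_{Φ∈Ω(n,m)}[Φ satisfiable] ≤ ε} (these minima exist since the satisfiability probability is nonincreasing in m and tends to 0 as m → ∞ for fixed n), one has liminf_{n→∞} (μ₂(n) − μ₁(n))/2ⁿ > 0. -/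
open scoped BigOperators

/-- A (possibly empty) Horn clause over variables `x₁,…,xₙ`: an optional positive
literal together with a finset of negated variables. -/
abbrev HClause (n : ℕ) := Option (Fin n) × Finset (Fin n)

/-- A Horn clause over `n` variables: a nonempty `HClause`. -/
abbrev HornClause (n : ℕ) := {C : HClause n // C ≠ ((none, ∅) : HClause n)}

/-- An assignment satisfies a clause iff its positive literal is true or some
negated variable is false. -/
def clauseSat {n : ℕ} (σ : Fin n → Bool) (C : HClause n) : Prop :=
  (∃ i, C.1 = some i ∧ σ i = true) ∨ (∃ j ∈ C.2, σ j = false)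

/-- A formula (an `m`-tuple of Horn clauses) is satisfiable. -/
def formulaSat {n m : ℕ} (Φ : Fin m → HornClause n) : Prop :=
  ∃ σ : Fin n → Bool, ∀ j, clauseSat σ (Φ j).1

/-- The probability that a random Horn formula with `n` variables and `m` clauses,
chosen independently and uniformly at random from all nonempty Horn clauses
(the model `Ω(n,m)`), is satisfiable. -/
noncomputable def hornSatProb (n m : ℕ) : ℝ :=
  (Nat.card {Φ : Fin m → HornClause n // formulaSat Φ} : ℝ) /
    (Fintype.card (HornClause n) : ℝ) ^ m

/-- `μ(n, q)` is the least number of clauses `m` for which the satisfiability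
probability of a random Horn formula from `Ω(n, m)` drops to at most `q`. -/
noncomputable def muHorn (n : ℕ) (q : ℝ) : ℕ := sInf {m : ℕ | hornSatProb n m ≤ q}

open Finset

/-! Unit propagation refutes a random formula with `O(2ⁿ)` clauses with probability bounded
away from `0`, while the all-false assignment survives `c·2ⁿ` clauses with probability at least
`e^{-2c}`. Once a set `T` of `t` variables is forced true, each clause `xᵥ ∨ ¬T'` with `v ∉ T`,
`T' ⊆ T` has probability about `2^{t-n}`, so a block of `2A(t+1)2^{n-t}` clauses forces a
new variable except with probability `e^{-A(t+1)}`. After `⌈log₂ n⌉` rounds there are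
`2^t - 1 ≥ n - 1` purely negative clauses inside `T`, and `2A·2ⁿ` more clauses contain one except
with probability `e^{-A}`. In total `10A·2ⁿ` clauses refute the formula except with probability
`3e^{-A}`. On the other side, the all-false assignment falsifies only the `n` positive unit
clauses. With `ε = e^{-62}` this gives `μ₁ ≤ 30·2ⁿ < 31·2ⁿ ≤ μ₂ ≤ 650·2ⁿ`. -/

lemma exp_neg_le_one_div_add_one {x : ℝ} (hx : 0 ≤ x) : Real.exp (-x) ≤ 1 / (x + 1) := by
  rw [Real.exp_neg, inv_eq_one_div]
  exact one_div_le_one_div_of_le (by positivity) (Real.add_one_le_exp x)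

section TupleDensity

variable {α : Type*} [Fintype α] {m : ℕ}

noncomputable def tupleDensity (P : (Fin m → α) → Prop) : ℝ :=
  Nat.card {φ // P φ} / (Fintype.card α : ℝ) ^ m

lemma tupleDensity_nonneg (P : (Fin m → α) → Prop) : 0 ≤ tupleDensity P := by
  unfold tupleDensity; positivity

lemma tupleDensity_mono {P Q : (Fin m → α) → Prop} (h : ∀ φ, P φ → Q φ) :
    tupleDensity P ≤ tupleDensity Q := by
  unfold tupleDensity
  gcongr
  exact Nat.card_mono (Set.toFinite _) h

lemma card_subtype_add_card_subtype_not (P : (Fin m → α) → Prop) :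
    Nat.card {φ // P φ} + Nat.card {φ // ¬ P φ} = Fintype.card α ^ m := by
  classical
  simp only [Nat.card_eq_fintype_card, Fintype.card_subtype_compl, Fintype.card_fun,
    Fintype.card_fin]
  exact Nat.add_sub_cancel' (by simpa using Fintype.card_subtype_le P)

lemma tupleDensity_forall_mem (G : Finset α) :
    tupleDensity (fun φ : Fin m → α => ∀ j, φ j ∈ G) = (#G / Fintype.card α : ℝ) ^ m := by
  rw [tupleDensity, Nat.card_congr (Equiv.subtypePiEquivPi (p := fun _ a => a ∈ G)), Nat.card_pi]
  simp [div_pow]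

lemma card_sigma_le_of_append {L K : ℕ} {P : (Fin L → α) → Prop}
    {Q : (Fin L → α) → (Fin K → α) → Prop} {R : (Fin (L + K) → α) → Prop}
    (hR : ∀ φ ψ, P φ → Q φ ψ → R (Fin.append φ ψ)) :
    Nat.card (Σ φ : {φ // P φ}, {ψ // Q φ ψ}) ≤ Nat.card {χ // R χ} := by
  refine Nat.card_le_card_of_injective (fun x => ⟨Fin.append x.1.1 x.2.1, hR _ _ x.1.2 x.2.2⟩) ?_
  rintro ⟨⟨φ, hφ⟩, ψ, hψ⟩ ⟨⟨φ', hφ'⟩, ψ', hψ'⟩ h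
  obtain ⟨rfl, rfl⟩ := Prod.mk.inj ((Fin.appendEquiv L K).injective (congrArg Subtype.val h))
  rfl

variable [Nonempty α]

lemma tupleDensity_not (P : (Fin m → α) → Prop) :
    tupleDensity (fun φ => ¬ P φ) = 1 - tupleDensity P := by
  have hcard : (Nat.card {φ // P φ} : ℝ) + Nat.card {φ // ¬ P φ} = (Fintype.card α : ℝ) ^ m := by
    exact_mod_cast card_subtype_add_card_subtype_not P
  unfold tupleDensity
  rw [eq_sub_iff_add_eq, ← add_div, add_comm, hcard, div_self (by positivity)]

lemma one_sub_exp_le_tupleDensity_exists_mem (G : Finset α) {c : ℝ}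
    (hc : c * Fintype.card α ≤ #G * m) :
    1 - Real.exp (-c) ≤ tupleDensity (fun φ : Fin m → α => ∃ j, φ j ∈ G) := by
  classical
  have hα : (0 : ℝ) < Fintype.card α := by exact_mod_cast Fintype.card_pos
  set x : ℝ := #G / Fintype.card α
  have hx : x ≤ 1 := div_le_one_of_le₀ (by exact_mod_cast card_le_univ G) hα.le
  have hcx : c ≤ x * m := by
    rw [div_mul_eq_mul_div, le_div_iff₀ hα]; linarith
  have hmiss : tupleDensity (fun φ : Fin m → α => ∀ j, φ j ∈ Gᶜ) = (1 - x) ^ m := by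
    rw [tupleDensity_forall_mem, card_compl, Nat.cast_sub (card_le_univ G), sub_div,
      div_self hα.ne']
  have hexists : tupleDensity (fun φ : Fin m → α => ∃ j, φ j ∈ G) = 1 - (1 - x) ^ m := by
    rw [← hmiss, ← tupleDensity_not]
    congr! 2 with φ
    simp
  calc 1 - Real.exp (-c) ≤ 1 - Real.exp (-x) ^ m := by
        rw [← Real.exp_nat_mul]
        gcongr
        linarith
    _ ≤ 1 - (1 - x) ^ m := by
        gcongr 1 - ?_
        exact pow_le_pow_left₀ (by linarith) (Real.one_sub_le_exp_neg x) m
    _ = _ := hexists.symm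

lemma mul_le_tupleDensity_append {L K : ℕ} {P : (Fin L → α) → Prop}
    {Q : (Fin L → α) → (Fin K → α) → Prop} {R : (Fin (L + K) → α) → Prop} {β : ℝ}
    (hR : ∀ φ ψ, P φ → Q φ ψ → R (Fin.append φ ψ))
    (hQ : ∀ φ, P φ → β ≤ tupleDensity (Q φ)) :
    tupleDensity P * β ≤ tupleDensity R := by
  classical
  have hN : (0 : ℝ) < Fintype.card α := by exact_mod_cast Fintype.card_pos
  have hsum : (Nat.card {φ // P φ} : ℝ) * β ≤
      (Nat.card (Σ φ : {φ // P φ}, {ψ // Q φ ψ}) : ℝ) / (Fintype.card α : ℝ) ^ K := by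
    rw [Nat.card_sigma, Nat.cast_sum, sum_div, Nat.card_eq_fintype_card, ← nsmul_eq_mul,
      ← Finset.card_univ, ← sum_const]
    exact sum_le_sum fun φ _ => hQ φ.1 φ.2
  have hcard : (Nat.card (Σ φ : {φ // P φ}, {ψ // Q φ ψ}) : ℝ) ≤ Nat.card {χ // R χ} := by
    exact_mod_cast card_sigma_le_of_append hR
  calc tupleDensity P * β = (Nat.card {φ // P φ} * β) / (Fintype.card α : ℝ) ^ L := by
        rw [tupleDensity, div_mul_eq_mul_div]
    _ ≤ (Nat.card (Σ φ : {φ // P φ}, {ψ // Q φ ψ}) : ℝ) / (Fintype.card α : ℝ) ^ K /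
          (Fintype.card α : ℝ) ^ L := by gcongr
    _ ≤ tupleDensity R := by
        rw [div_div, ← pow_add, add_comm K, tupleDensity]
        gcongr

lemma one_sub_add_le_tupleDensity_append {L K : ℕ} {P : (Fin L → α) → Prop}
    {Q : (Fin L → α) → (Fin K → α) → Prop} {R : (Fin (L + K) → α) → Prop} {a b : ℝ}
    (ha : 0 ≤ a) (hb : 0 ≤ b) (hP : 1 - a ≤ tupleDensity P)
    (hR : ∀ φ ψ, P φ → Q φ ψ → R (Fin.append φ ψ))
    (hQ : ∀ φ, P φ → 1 - b ≤ tupleDensity (Q φ)) :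
    1 - (a + b) ≤ tupleDensity R := by
  rcases le_or_gt b 1 with hb1 | hb1
  · calc 1 - (a + b) ≤ (1 - a) * (1 - b) := by nlinarith
      _ ≤ tupleDensity P * (1 - b) := by gcongr
      _ ≤ tupleDensity R := mul_le_tupleDensity_append hR hQ
  · linarith [tupleDensity_nonneg R]

end TupleDensity

section Horn

variable {n : ℕ}

instance [NeZero n] : Nonempty (HornClause n) := ⟨⟨(some 0, ∅), by simp⟩⟩

instance (σ : Fin n → Bool) : DecidablePred (clauseSat σ) := fun _ => by
  unfold clauseSat; infer_instance

lemma card_hornClause (n : ℕ) : Fintype.card (HornClause n) = (n + 1) * 2 ^ n - 1 := by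
  rw [Fintype.card_subtype_compl, Fintype.card_subtype_eq]
  simp

lemma le_card_hornClause (n : ℕ) : n * 2 ^ n ≤ Fintype.card (HornClause n) := by
  rw [card_hornClause]
  have : 1 ≤ 2 ^ n := Nat.one_le_two_pow
  rw [add_one_mul]
  omega

lemma card_hornClause_le_two_mul_sub {t : ℕ} (ht : 2 * t < n) :
    Fintype.card (HornClause n) ≤ 2 * (n - t) * 2 ^ n := by
  rw [card_hornClause]
  have : n + 1 ≤ 2 * (n - t) := by omega
  exact (Nat.sub_le _ _).trans (Nat.mul_le_mul_right _ this)

def UnsatGiven {K : ℕ} (T : Finset (Fin n)) (ψ : Fin K → HornClause n) : Prop :=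
  ∀ σ : Fin n → Bool, (∀ i ∈ T, σ i = true) → ∃ j, ¬ clauseSat σ (ψ j).1

lemma UnsatGiven.not_formulaSat {K : ℕ} {ψ : Fin K → HornClause n} (h : UnsatGiven ∅ ψ) :
    ¬ formulaSat ψ := fun ⟨σ, hσ⟩ => by
  obtain ⟨j, hj⟩ := h σ (by simp)
  exact hj (hσ j)

def propagatingClauses (T : Finset (Fin n)) : Finset (HornClause n) :=
  {C | (∃ v ∉ T, C.1.1 = some v) ∧ C.1.2 ⊆ T}

def negativeClauses (T : Finset (Fin n)) : Finset (HornClause n) :=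
  {C | C.1.1 = none ∧ C.1.2 ⊆ T}

lemma le_card_propagatingClauses (T : Finset (Fin n)) :
    (n - #T) * 2 ^ #T ≤ #(propagatingClauses T) := by
  have hsrc : #((univ \ T) ×ˢ T.powerset) = (n - #T) * 2 ^ #T := by
    simp [card_sdiff_of_subset (subset_univ T)]
  rw [← hsrc]
  refine card_le_card_of_injOn (fun p => ⟨(some p.1, p.2), by simp⟩) ?_ ?_
  · intro p hp
    simp only [coe_product, Set.mem_prod, mem_coe, mem_sdiff, mem_univ, true_and,
      mem_powerset] at hp
    simp [propagatingClauses, hp.1, hp.2]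
  · intro p _ q _ h
    simp only [Subtype.mk.injEq, Prod.mk.injEq, Option.some.injEq] at h
    exact Prod.ext h.1 h.2

lemma le_card_negativeClauses (T : Finset (Fin n)) : 2 ^ #T - 1 ≤ #(negativeClauses T) := by
  have hsrc : #(T.powerset.erase ∅) = 2 ^ #T - 1 := by
    rw [card_erase_of_mem (empty_mem_powerset T), card_powerset]
  rw [← hsrc]
  refine card_le_card_of_surjOn (fun C => C.1.2) fun B hB => ?_
  simp only [coe_erase, Set.mem_sdiff, mem_coe, mem_powerset, Set.mem_singleton_iff] at hB
  exact ⟨⟨(none, B), by simp [hB.2]⟩, by simp [negativeClauses, hB.1], rfl⟩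

lemma unsatGiven_of_mem_negativeClauses {K : ℕ} {T : Finset (Fin n)}
    {ψ : Fin K → HornClause n} {j : Fin K} (hj : ψ j ∈ negativeClauses T) : UnsatGiven T ψ := by
  simp only [negativeClauses, mem_filter, mem_univ, true_and] at hj
  refine fun σ hσ => ⟨j, ?_⟩
  rintro (⟨i, hi, -⟩ | ⟨i, hi, hσi⟩)
  · simp [hj.1] at hi
  · simp [hσ i (hj.2 hi)] at hσi

lemma UnsatGiven.append {L K : ℕ} {T : Finset (Fin n)} {φ : Fin L → HornClause n}
    {ψ : Fin K → HornClause n} {j : Fin L} {v : Fin n} (hv : (φ j).1.1 = some v)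
    (hbody : (φ j).1.2 ⊆ T) (hψ : UnsatGiven (insert v T) ψ) :
    UnsatGiven T (Fin.append φ ψ) := by
  intro σ hσ
  by_cases hσv : σ v = true
  · obtain ⟨k, hk⟩ := hψ σ (by simpa [hσv] using hσ)
    exact ⟨Fin.natAdd L k, by rwa [Fin.append_right]⟩
  · refine ⟨Fin.castAdd K j, ?_⟩
    rw [Fin.append_left]
    rintro (⟨i, hi, hσi⟩ | ⟨i, hi, hσi⟩)
    · rw [hv, Option.some.injEq] at hi
      exact hσv (hi ▸ hσi)
    · simp [hσ i (hbody hi)] at hσi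

lemma one_sub_exp_le_tupleDensity_unsatGiven [NeZero n] (T : Finset (Fin n)) {m : ℕ}
    {c : ℝ} (hc : c * Fintype.card (HornClause n) ≤ #(negativeClauses T) * m) :
    1 - Real.exp (-c) ≤ tupleDensity (UnsatGiven (K := m) T) :=
  (one_sub_exp_le_tupleDensity_exists_mem _ hc).trans <|
    tupleDensity_mono fun _ ⟨_, hj⟩ => unsatGiven_of_mem_negativeClauses hj

lemma one_sub_exp_add_le_tupleDensity_unsatGiven [NeZero n] (T : Finset (Fin n)) {L K : ℕ}
    {c b : ℝ} (hb : 0 ≤ b) (hc : c * Fintype.card (HornClause n) ≤ #(propagatingClauses T) * L)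
    (hstep : ∀ v ∉ T, 1 - b ≤ tupleDensity (UnsatGiven (K := K) (insert v T))) :
    1 - (Real.exp (-c) + b) ≤ tupleDensity (UnsatGiven (K := L + K) T) := by
  refine one_sub_add_le_tupleDensity_append (Real.exp_pos _).le hb
    (one_sub_exp_le_tupleDensity_exists_mem _ hc)
    (Q := fun φ ψ => ∃ j v, (φ j).1.1 = some v ∧ (φ j).1.2 ⊆ T ∧ UnsatGiven (insert v T) ψ)
    (fun φ ψ _ ⟨j, v, hv, hbody, hψ⟩ => hψ.append hv hbody) fun φ ⟨j, hj⟩ => ?_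
  simp only [propagatingClauses, mem_filter, mem_univ, true_and] at hj
  obtain ⟨⟨v, hvT, hv⟩, hbody⟩ := hj
  exact (hstep v hvT).trans (tupleDensity_mono fun ψ hψ => ⟨j, v, hv, hbody, hψ⟩)

lemma two_mul_clog_two_le (hn : 6 ≤ n) : 2 * Nat.clog 2 n ≤ n := by
  have hk : 2 * (n / 2) + 1 ≤ 2 ^ (n / 2) := by
    refine Nat.le_induction (by norm_num) (fun k _ ih => ?_) (n / 2) (by omega : 3 ≤ n / 2)
    rw [pow_succ]
    have : 2 ≤ 2 ^ k := Nat.le_self_pow (by omega) 2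
    omega
  have := (Nat.clog_le_iff_le_pow one_lt_two).2 (by omega : n ≤ 2 ^ (n / 2))
  omega

lemma sum_succ_mul_two_pow_sub_le {k : ℕ} (hk : k ≤ n + 1) :
    ∑ s ∈ range k, (s + 1) * 2 ^ (n - s) ≤ 4 * 2 ^ n := by
  suffices h : ∀ k ≤ n + 1,
      ∑ s ∈ range k, (s + 1) * 2 ^ (n - s) + (k + 2) * 2 ^ (n + 1 - k) = 4 * 2 ^ n by
    have := h k hk; omega
  intro k hk
  induction k with
  | zero => simp [pow_succ]; ring
  | succ k ih =>
    rw [sum_range_succ, ← ih (by omega), show n + 1 - k = n - k + 1 by omega,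
      show n + 1 - (k + 1) = n - k by omega, pow_succ]
    ring

def cascadeLength (n A t : ℕ) : ℕ :=
  ∑ s ∈ Ico t (Nat.clog 2 n), 2 * A * (s + 1) * 2 ^ (n - s) + 2 * A * 2 ^ n

lemma one_sub_le_tupleDensity_unsatGiven_cascade (hn : 6 ≤ n) (A : ℕ) {T : Finset (Fin n)}
    (hT : #T ≤ Nat.clog 2 n) {m : ℕ} (hm : cascadeLength n A #T ≤ m) :
    1 - (∑ s ∈ Ico #T (Nat.clog 2 n), Real.exp (-A) ^ (s + 1) + Real.exp (-A)) ≤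
      tupleDensity (UnsatGiven (K := m) T) := by
  have : NeZero n := ⟨by omega⟩
  have hS := two_mul_clog_two_le hn
  obtain ⟨k, hk⟩ := Nat.exists_eq_add_of_le hT
  induction k generalizing T m with
  | zero =>
    rw [add_zero] at hk
    simp only [cascadeLength, ← hk, Ico_self, sum_empty, zero_add] at hm ⊢
    refine one_sub_exp_le_tupleDensity_unsatGiven T (c := A) ?_
    have hneg := le_card_negativeClauses T
    have hpow : n ≤ 2 ^ #T := hk ▸ Nat.le_pow_clog one_lt_two n
    have hN := card_hornClause_le_two_mul_sub (n := n) (t := 1) (by omega)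
    have : A * Fintype.card (HornClause n) ≤ #(negativeClauses T) * m :=
      calc A * Fintype.card (HornClause n) ≤ A * (2 * (n - 1) * 2 ^ n) := by gcongr
        _ = (n - 1) * (2 * A * 2 ^ n) := by ring
        _ ≤ #(negativeClauses T) * m := by gcongr; omega
    exact_mod_cast this
  | succ k ih =>
    have ht : #T < Nat.clog 2 n := by omega
    rw [cascadeLength, sum_eq_sum_Ico_succ_bot ht, add_assoc, ← cascadeLength] at hm
    obtain ⟨K, rfl⟩ := Nat.exists_eq_add_of_le (le_of_add_le_left hm)
    rw [sum_eq_sum_Ico_succ_bot ht, add_assoc]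
    have hprop := le_card_propagatingClauses T
    have hN := card_hornClause_le_two_mul_sub (n := n) (t := #T) (by omega)
    have hsplit : 2 ^ #T * 2 ^ (n - #T) = 2 ^ n := by rw [← pow_add]; congr 1; omega
    have hc : A * (#T + 1) * Fintype.card (HornClause n) ≤
        #(propagatingClauses T) * (2 * A * (#T + 1) * 2 ^ (n - #T)) :=
      calc A * (#T + 1) * Fintype.card (HornClause n)
          ≤ A * (#T + 1) * (2 * (n - #T) * 2 ^ n) := by gcongr
        _ = (n - #T) * 2 ^ #T * (2 * A * (#T + 1) * 2 ^ (n - #T)) := by rw [← hsplit]; ring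
        _ ≤ _ := by gcongr
    have hexp : Real.exp (-((A * (#T + 1) : ℕ) : ℝ)) = Real.exp (-A) ^ (#T + 1) := by
      rw [← Real.exp_nat_mul]; push_cast; ring_nf
    rw [← hexp]
    refine one_sub_exp_add_le_tupleDensity_unsatGiven T (by positivity) (by exact_mod_cast hc)
      fun v hv => ?_
    have hcard : #(insert v T) = #T + 1 := card_insert_of_notMem hv
    rw [← hcard]
    exact ih (by omega) (hcard ▸ by omega) (by omega)

lemma cascadeLength_zero_le (hn : Nat.clog 2 n ≤ n + 1) (A : ℕ) :
    cascadeLength n A 0 ≤ 10 * A * 2 ^ n := by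
  have hsum : ∑ s ∈ Ico 0 (Nat.clog 2 n), 2 * A * (s + 1) * 2 ^ (n - s) =
      2 * A * ∑ s ∈ range (Nat.clog 2 n), (s + 1) * 2 ^ (n - s) := by
    rw [range_eq_Ico, mul_sum]; exact sum_congr rfl fun s _ => by ring
  have := Nat.mul_le_mul_left (2 * A) (sum_succ_mul_two_pow_sub_le hn)
  rw [cascadeLength, hsum]
  linarith

lemma hornSatProb_eq_tupleDensity (n m : ℕ) :
    hornSatProb n m = tupleDensity (α := HornClause n) (m := m) formulaSat := rfl

lemma hornSatProb_le (hn : 6 ≤ n) {A : ℕ} (hA : 1 ≤ A) {m : ℕ} (hm : 10 * A * 2 ^ n ≤ m) :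
    hornSatProb n m ≤ 3 * Real.exp (-A) := by
  have : NeZero n := ⟨by omega⟩
  have hE : Real.exp (-A) ≤ 1 / 2 := by
    refine (exp_neg_le_one_div_add_one A.cast_nonneg).trans ?_
    gcongr
    exact_mod_cast Nat.succ_le_succ hA
  set E := Real.exp (-A)
  have hgeom : ∑ s ∈ range (Nat.clog 2 n), E ^ (s + 1) ≤ 2 * E := by
    simp_rw [pow_succ, ← sum_mul]
    have : ∑ s ∈ range (Nat.clog 2 n), E ^ s ≤ ∑ s ∈ range (Nat.clog 2 n), (1 / 2 : ℝ) ^ s :=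
      sum_le_sum fun s _ => pow_le_pow_left₀ (Real.exp_pos _).le hE s
    nlinarith [sum_geometric_two_le (Nat.clog 2 n), Real.exp_pos (-A : ℝ)]
  have hS := two_mul_clog_two_le hn
  have hcascade := one_sub_le_tupleDensity_unsatGiven_cascade hn A (T := ∅) (by simp)
    ((cascadeLength_zero_le (by omega) A).trans hm)
  rw [card_empty, ← range_eq_Ico] at hcascade
  have hunsat : tupleDensity (UnsatGiven (K := m) (∅ : Finset (Fin n))) ≤ 1 - hornSatProb n m := by
    rw [hornSatProb_eq_tupleDensity, ← tupleDensity_not]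
    exact tupleDensity_mono fun _ h => h.not_formulaSat
  linarith

lemma exists_eq_unit_of_not_clauseSat_false {C : HornClause n}
    (h : ¬ clauseSat (fun _ => false) C.1) : ∃ i, C.1 = (some i, ∅) := by
  obtain ⟨⟨head, body⟩, hC⟩ := C
  simp only [clauseSat, not_or, not_exists, not_and, Bool.false_eq_true, imp_false,
    not_true_eq_false] at h
  have hbody : body = ∅ := eq_empty_of_forall_notMem fun j hj => h.2 j hj
  cases head with
  | none => simp [hbody] at hC
  | some i => exact ⟨i, by simp [hbody]⟩

lemma card_hornClause_le_card_clauseSat_false_add (n : ℕ) :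
    Fintype.card (HornClause n) ≤ #{C : HornClause n | clauseSat (fun _ => false) C.1} + n := by
  have hunits : #{C : HornClause n | ¬ clauseSat (fun _ => false) C.1} ≤ n := by
    calc _ ≤ #(univ.image fun i : Fin n => (⟨(some i, ∅), by simp⟩ : HornClause n)) := by
          refine card_le_card fun C hC => ?_
          obtain ⟨i, hi⟩ := exists_eq_unit_of_not_clauseSat_false (mem_filter.1 hC).2
          exact mem_image.2 ⟨i, mem_univ _, Subtype.ext hi.symm⟩
      _ ≤ n := card_image_le.trans (by simp)
  rw [← card_univ, ← card_filter_add_card_filter_not (fun C : HornClause n =>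
    clauseSat (fun _ => false) C.1)]
  omega

lemma exp_neg_two_mul_le_one_sub {p : ℝ} (hp0 : 0 ≤ p) (hp : p ≤ 1 / 2) :
    Real.exp (-(2 * p)) ≤ 1 - p := by
  refine (exp_neg_le_one_div_add_one (by positivity)).trans ?_
  rw [div_le_iff₀ (by positivity)]
  nlinarith

lemma exp_le_hornSatProb (hn : 1 ≤ n) (m : ℕ) :
    Real.exp (-(2 * m / 2 ^ n)) ≤ hornSatProb n m := by
  have : NeZero n := ⟨by omega⟩
  set G : Finset (HornClause n) := {C | clauseSat (fun _ => false) C.1}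
  set N := Fintype.card (HornClause n)
  set p : ℝ := 1 / 2 ^ n
  have hN : (0 : ℝ) < N := by exact_mod_cast Fintype.card_pos
  have hp : p ≤ 1 / 2 := one_div_le_one_div_of_le (by norm_num) (by
    have : (2 : ℝ) ^ 1 ≤ 2 ^ n := pow_le_pow_right₀ (by norm_num) hn
    simpa using this)
  have hG : 1 - p ≤ #G / N := by
    have h1 : (N : ℝ) ≤ #G + n := by exact_mod_cast card_hornClause_le_card_clauseSat_false_add n
    have h2 : (n : ℝ) * 2 ^ n ≤ N := by exact_mod_cast le_card_hornClause n
    rw [le_div_iff₀ hN]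
    have : (n : ℝ) ≤ p * N := by
      rw [div_mul_eq_mul_div, one_mul, le_div_iff₀ (by positivity)]; linarith
    linarith
  calc Real.exp (-(2 * m / 2 ^ n)) = Real.exp (-(2 * p)) ^ m := by
        rw [← Real.exp_nat_mul]; congr 1; ring
    _ ≤ (#G / N : ℝ) ^ m :=
        pow_le_pow_left₀ (Real.exp_pos _).le
          ((exp_neg_two_mul_le_one_sub (by positivity) hp).trans hG) m
    _ = tupleDensity (fun Φ : Fin m → HornClause n => ∀ j, Φ j ∈ G) :=
        (tupleDensity_forall_mem G).symm
    _ ≤ hornSatProb n m :=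
        tupleDensity_mono fun Φ hΦ => ⟨fun _ => false, fun j => (mem_filter.1 (hΦ j)).2⟩

lemma muHorn_le (hn : 6 ≤ n) {A : ℕ} (hA : 1 ≤ A) {q : ℝ}
    (hq : 3 * Real.exp (-A) ≤ q) : muHorn n q ≤ 10 * A * 2 ^ n :=
  Nat.sInf_le ((hornSatProb_le hn hA le_rfl).trans hq)

lemma le_muHorn (hn : 1 ≤ n) {q : ℝ} {k m₀ : ℕ} (hq : q ≤ Real.exp (-(2 * k)))
    (hm₀ : hornSatProb n m₀ ≤ q) : k * 2 ^ n ≤ muHorn n q := by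
  refine le_csInf ⟨m₀, hm₀⟩ fun m hm => ?_
  by_contra! hlt
  have hlt' : (m : ℝ) < k * 2 ^ n := by exact_mod_cast hlt
  have : Real.exp (-(2 * k)) < Real.exp (-(2 * m / 2 ^ n)) := by
    rw [Real.exp_lt_exp, neg_lt_neg_iff, div_lt_iff₀ (by positivity)]
    linarith
  linarith [exp_le_hornSatProb hn m, show hornSatProb n m ≤ q from hm]

end Horn

lemma sub_le_liminf_div_two_pow {μ₁ μ₂ : ℕ → ℕ} {a b C : ℝ}
    (h : ∀ᶠ n in Filter.atTop,
      (μ₁ n : ℝ) ≤ a * 2 ^ n ∧ b * 2 ^ n ≤ μ₂ n ∧ (μ₂ n : ℝ) ≤ C * 2 ^ n) :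
    b - a ≤ Filter.liminf (fun n => ((μ₂ n : ℝ) - μ₁ n) / 2 ^ n) Filter.atTop := by
  have hup : ∀ᶠ n in Filter.atTop, ((μ₂ n : ℝ) - μ₁ n) / 2 ^ n ≤ C :=
    h.mono fun n ⟨_, _, h₂⟩ => by
      rw [div_le_iff₀ (by positivity)]; linarith [(μ₁ n).cast_nonneg (α := ℝ)]
  refine Filter.le_liminf_of_le (Filter.isBoundedUnder_of_eventually_le hup).isCoboundedUnder_ge
    (h.mono fun n ⟨h₁, h₂, _⟩ => ?_)
  rw [le_div_iff₀ (by positivity)]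
  linarith

/-- Random Horn satisfiability has a coarse threshold at `2ⁿ`: for some `ε > 0`,
with `μ₁(n) = min {m : Pr[sat] ≤ 1 - ε}` and `μ₂(n) = min {m : Pr[sat] ≤ ε}`,
the quantity `(μ₂(n) - μ₁(n))/2ⁿ` has positive liminf. -/
theorem horn_sat_coarse_threshold :
    ∃ ε : ℝ, 0 < ε ∧
      0 < Filter.liminf
        (fun n : ℕ => ((muHorn n ε : ℝ) - (muHorn n (1 - ε) : ℝ)) / 2 ^ n)
        Filter.atTop := by
  refine ⟨Real.exp (-62), Real.exp_pos _, ?_⟩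
  have h3 : Real.exp (-3) ≤ 1 / 4 :=
    (exp_neg_le_one_div_add_one (by norm_num)).trans_eq (by norm_num)
  have h62 : Real.exp (-62) ≤ Real.exp (-3) := Real.exp_le_exp.2 (by norm_num)
  have h65 : 3 * Real.exp (-65) ≤ Real.exp (-62) := by
    rw [show (-65 : ℝ) = -62 + -3 by norm_num, Real.exp_add]
    nlinarith [Real.exp_pos (-62)]
  have hbounds : ∀ᶠ n : ℕ in Filter.atTop,
      (muHorn n (1 - Real.exp (-62)) : ℝ) ≤ 30 * 2 ^ n ∧
        31 * 2 ^ n ≤ (muHorn n (Real.exp (-62)) : ℝ) ∧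
        (muHorn n (Real.exp (-62)) : ℝ) ≤ 650 * 2 ^ n := by
    refine Filter.eventually_atTop.2 ⟨6, fun n hn => ?_⟩
    have h₁ := muHorn_le hn (A := 3) (by norm_num) (q := 1 - Real.exp (-62))
      (by push_cast; linarith)
    have h₂ := le_muHorn (k := 31) (q := Real.exp (-62)) (by omega) (by norm_num)
      ((hornSatProb_le hn (A := 65) (by norm_num) le_rfl).trans (by push_cast; exact h65))
    have h₃ := muHorn_le hn (A := 65) (by norm_num) (q := Real.exp (-62)) (by push_cast; exact h65)
    exact ⟨by exact_mod_cast h₁, by exact_mod_cast h₂, by exact_mod_cast h₃⟩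
  have := sub_le_liminf_div_two_pow hbounds
  linarith
end

section
/- For all λ, μ > 0, the total variation distance between the Poisson distributions with means λ and μ satisfies d_TV(Po(λ), Po(μ)) ≤ |μ − λ|. -/
/-- The Poisson probability mass function `Po(λ)(k) = e^{-λ} λᵏ / k!`. -/
noncomputable def poissonPMF (lam : ℝ) (k : ℕ) : ℝ :=
  Real.exp (-lam) * lam ^ k / (Nat.factorial k : ℝ)

/-!
The curve `t ↦ Po(t)` has derivative `∂ₜ Po(t)(k) = Po(t)(k - 1) - Po(t)(k)`, whose `ℓ¹` norm is at
most `‖Po(t)‖₁ + ‖Po(t)‖₁ = 2`, so the mean value theorem gives `‖Po(λ) - Po(μ)‖₁ ≤ 2 |μ - λ|`.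
To stay with real-valued functions, the mean value theorem is applied on each finite truncation to
`t ↦ ∑ₖ σₖ Po(t)(k)`, where `σₖ` is the sign of `Po(μ)(k) - Po(λ)(k)`.
-/

open Finset
open scoped Nat

theorem sum_abs_sub_le_of_sum_abs_hasDerivWithinAt_le {ι : Type*} {s : Finset ι}
    {f f' : ι → ℝ → ℝ} {D : Set ℝ} {C x y : ℝ}
    (hf : ∀ i ∈ s, ∀ t ∈ D, HasDerivWithinAt (f i) (f' i t) D t)
    (bound : ∀ t ∈ D, ∑ i ∈ s, |f' i t| ≤ C) (hD : Convex ℝ D) (hx : x ∈ D) (hy : y ∈ D) :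
    ∑ i ∈ s, |f i y - f i x| ≤ C * |y - x| := by
  set σ : ι → ℝ := fun i => SignType.sign (f i y - f i x)
  have hσ : ∀ i, |σ i| ≤ 1 := fun i => by
    rcases SignType.trichotomy (SignType.sign (f i y - f i x)) with h | h | h <;> simp [σ, h]
  have hg : ∀ t ∈ D, HasDerivWithinAt (fun t => ∑ i ∈ s, σ i * f i t)
      (∑ i ∈ s, σ i * f' i t) D t := fun t ht =>
    HasDerivWithinAt.fun_sum fun i hi => (hf i hi t ht).const_mul (σ i)
  have hg' : ∀ t ∈ D, ‖∑ i ∈ s, σ i * f' i t‖ ≤ C := fun t ht => calc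
    ‖∑ i ∈ s, σ i * f' i t‖ ≤ ∑ i ∈ s, |σ i * f' i t| := norm_sum_le _ _
    _ ≤ ∑ i ∈ s, |f' i t| := sum_le_sum fun i _ => by
      rw [abs_mul]; exact mul_le_of_le_one_left (abs_nonneg _) (hσ i)
    _ ≤ C := bound t ht
  calc ∑ i ∈ s, |f i y - f i x|
      = ∑ i ∈ s, σ i * f i y - ∑ i ∈ s, σ i * f i x := by
        simp only [← sum_sub_distrib, ← mul_sub, σ, sign_mul_self]
    _ ≤ C * |y - x| :=
        (le_abs_self _).trans (hD.norm_image_sub_le_of_norm_hasDerivWithin_le hg hg' hx hy)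

theorem poissonPMF_nonneg {t : ℝ} (ht : 0 ≤ t) (k : ℕ) : 0 ≤ poissonPMF t k := by
  unfold poissonPMF; positivity

theorem hasSum_poissonPMF (t : ℝ) : HasSum (poissonPMF t) 1 := by
  have h := (NormedSpace.expSeries_div_hasSum_exp (𝔸 := ℝ) t).mul_left (Real.exp (-t))
  rw [← Real.exp_eq_exp_ℝ, ← Real.exp_add, neg_add_cancel, Real.exp_zero] at h
  exact (funext fun k => mul_div_assoc _ _ _ : poissonPMF t = _) ▸ h

theorem sum_range_poissonPMF_le_one {t : ℝ} (ht : 0 ≤ t) (n : ℕ) :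
    ∑ k ∈ range n, poissonPMF t k ≤ 1 :=
  sum_le_hasSum _ (fun k _ => poissonPMF_nonneg ht k) (hasSum_poissonPMF t)

noncomputable def poissonPMFDeriv (t : ℝ) : ℕ → ℝ
  | 0 => -poissonPMF t 0
  | k + 1 => poissonPMF t k - poissonPMF t (k + 1)

theorem hasDerivAt_poissonPMF (t : ℝ) (k : ℕ) :
    HasDerivAt (fun s => poissonPMF s k) (poissonPMFDeriv t k) t := by
  have h : HasDerivAt (fun s => Real.exp (-s) * s ^ k / k !)
      ((Real.exp (-t) * -1 * t ^ k + Real.exp (-t) * (k * t ^ (k - 1))) / k !) t :=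
    (((hasDerivAt_neg t).exp).mul (hasDerivAt_pow k t)).div_const _
  refine h.congr_deriv ?_
  cases k with
  | zero => simp [poissonPMFDeriv, poissonPMF]
  | succ k =>
    simp only [poissonPMFDeriv, poissonPMF, Nat.factorial_succ, Nat.add_sub_cancel]
    push_cast
    field_simp
    ring

theorem sum_range_abs_poissonPMFDeriv_le_two {t : ℝ} (ht : 0 ≤ t) (n : ℕ) :
    ∑ k ∈ range n, |poissonPMFDeriv t k| ≤ 2 := by
  have hp := poissonPMF_nonneg ht
  cases n with
  | zero => simp
  | succ m =>
    calc ∑ k ∈ range (m + 1), |poissonPMFDeriv t k|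
        = ∑ k ∈ range m, |poissonPMF t k - poissonPMF t (k + 1)| + |-poissonPMF t 0| :=
          sum_range_succ' _ _
      _ ≤ ∑ k ∈ range m, (poissonPMF t k + poissonPMF t (k + 1)) + poissonPMF t 0 := by
          gcongr with k
          · exact abs_sub_le_iff.2 ⟨by linarith [hp (k + 1)], by linarith [hp k]⟩
          · rw [abs_neg, abs_of_nonneg (hp 0)]
      _ = ∑ k ∈ range m, poissonPMF t k + ∑ k ∈ range (m + 1), poissonPMF t k := by
          rw [sum_add_distrib, sum_range_succ' (poissonPMF t), add_assoc]
      _ ≤ 2 := by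
          linarith [sum_range_poissonPMF_le_one ht m, sum_range_poissonPMF_le_one ht (m + 1)]

/-- For all `λ, μ > 0`, the total variation distance between `Po(λ)` and
`Po(μ)` is at most `|μ - λ|`. -/
theorem tv_poisson_poisson (lam mu : ℝ) (hlam : 0 < lam) (hmu : 0 < mu) :
    (1 / 2) * ∑' k : ℕ, |poissonPMF lam k - poissonPMF mu k| ≤ |mu - lam| := by
  have h : ∀ n, ∑ k ∈ range n, |poissonPMF mu k - poissonPMF lam k| ≤ 2 * |mu - lam| :=
    fun n => sum_abs_sub_le_of_sum_abs_hasDerivWithinAt_le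
      (fun k _ t _ => (hasDerivAt_poissonPMF t k).hasDerivWithinAt)
      (fun t ht => sum_range_abs_poissonPMFDeriv_le_two ht n) (convex_Ici 0)
      (Set.mem_Ici.2 hlam.le) (Set.mem_Ici.2 hmu.le)
  simp_rw [abs_sub_comm (poissonPMF lam _)]
  linarith [Real.tsum_le_of_sum_range_le (fun _ => abs_nonneg _) h]
end
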